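/- Let W and V be channels from a finite input alphabet X to finite output alphabets, and λ ≥ 1 a constant such that I(P,W) ≤ λ I(P,V) for every input distribution P. Then for every joint distribution of (U, X, Y1, Y2) with Markov chain U → X → (Y1, Y2), where Y1 is the output of W and Y2 the output of V on input X, it holds that I(X;Y1|U) + λ I(U;Y2) ≤ λ I(X;Y2). -/
import Mathlib


open Finset

/-- Mutual information `I(P, W)` of an input distribution `P` through the channel `W`. -/
noncomputable def mutInfo {X Z : Type*} [Fintype X] [Fintype Z]
    (P : X → ℝ) (W : X → Z → ℝ) : ℝ :=
  ∑ x, ∑ z, P x * W x z * Real.log (W x z / (∑ x', P x' * W x' z))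

/-- Conditional mutual information `I(X;Y|U)` for a joint distribution `p` of `(U,X)`
and channel `W` (Markov chain `U → X → Y`). -/
noncomputable def condMI {U X Z : Type*} [Fintype U] [Fintype X] [Fintype Z]
    (p : U → X → ℝ) (W : X → Z → ℝ) : ℝ :=
  ∑ u, (∑ x, p u x) * mutInfo (fun x => p u x / ∑ x', p u x') W

/-- Mutual information `I(U;Y)` where `Y` is the output of channel `V` on input `X`
and `p` is the joint distribution of `(U,X)` (Markov chain `U → X → Y`). -/
noncomputable def miUY {U X Y : Type*} [Fintype U] [Fintype X] [Fintype Y]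
    (p : U → X → ℝ) (V : X → Y → ℝ) : ℝ :=
  ∑ u, ∑ y, (∑ x, p u x * V x y) *
    Real.log ((∑ x, p u x * V x y) /
      ((∑ x, p u x) * ∑ u', ∑ x, p u' x * V x y))

/-- Key per-`u` identity: `P_u · I(X;Y|U=u) + (U;Y)-contribution = (X;Y)-contribution`. -/
lemma key_u {X Y2 : Type*} [Fintype X] [Fintype Y2]
    (V : X → Y2 → ℝ) (hVnn : ∀ x y, 0 ≤ V x y)
    (f : X → ℝ) (hfnn : ∀ x, 0 ≤ f x)
    (Q : Y2 → ℝ) (hQ : ∀ x y, f x * V x y ≤ Q y) :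
    (∑ x, f x) * mutInfo (fun x => f x / ∑ x', f x') V
      + ∑ y, (∑ x, f x * V x y) * Real.log ((∑ x, f x * V x y) / ((∑ x, f x) * Q y))
    = ∑ x, ∑ y, f x * V x y * Real.log (V x y / Q y) := by
  classical
  have hSnn : (0:ℝ) ≤ ∑ x, f x := Finset.sum_nonneg fun x _ => hfnn x
  rcases hSnn.eq_or_lt with h0 | hS
  · have hz : ∀ x, f x = 0 := by
      intro x
      have := (Finset.sum_eq_zero_iff_of_nonneg (fun x _ => hfnn x)).mp h0.symm
      exact this x (Finset.mem_univ x)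
    simp [hz]
  · unfold mutInfo
    have hden : ∀ y, (∑ x', f x' / (∑ x'', f x'') * V x' y)
        = (∑ x', f x' * V x' y) / (∑ x'', f x'') := by
      intro y
      rw [Finset.sum_div]
      exact Finset.sum_congr rfl fun x _ => by ring
    simp only [hden]
    rw [Finset.mul_sum]
    have hterm : ∀ x, (∑ x', f x') * (∑ y, f x / (∑ x'', f x'') * V x y *
          Real.log (V x y / ((∑ x', f x' * V x' y) / (∑ x'', f x''))))
        = ∑ y, f x * V x y *
          Real.log (V x y / ((∑ x', f x' * V x' y) / (∑ x'', f x''))) := by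
      intro x
      rw [Finset.mul_sum]
      refine Finset.sum_congr rfl fun y _ => ?_
      field_simp
    simp only [hterm]
    have hsum2 : (∑ y, (∑ x, f x * V x y) *
          Real.log ((∑ x, f x * V x y) / ((∑ x, f x) * Q y)))
        = ∑ x, ∑ y, f x * V x y *
          Real.log ((∑ x', f x' * V x' y) / ((∑ x', f x') * Q y)) := by
      rw [Finset.sum_comm]
      exact Finset.sum_congr rfl fun y _ => by rw [Finset.sum_mul]
    rw [hsum2, ← Finset.sum_add_distrib]
    refine Finset.sum_congr rfl fun x _ => ?_
    rw [← Finset.sum_add_distrib]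
    refine Finset.sum_congr rfl fun y _ => ?_
    rcases (mul_nonneg (hfnn x) (hVnn x y)).eq_or_lt with hc | hc
    · rw [← hc]; ring
    · have hfx : 0 < f x := by
        rcases mul_pos_iff.mp hc with ⟨h1, _⟩ | ⟨h1, h2⟩
        · exact h1
        · exact absurd h2 (not_lt.mpr (hVnn x y))
      have hv : 0 < V x y := by
        rcases mul_pos_iff.mp hc with ⟨_, h2⟩ | ⟨h1, _⟩
        · exact h2
        · exact absurd h1 (not_lt.mpr (hfnn x))
      have hT : 0 < ∑ x', f x' * V x' y :=
        lt_of_lt_of_le hc (Finset.single_le_sum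
          (fun x' _ => mul_nonneg (hfnn x') (hVnn x' y)) (Finset.mem_univ x))
      have hQy : 0 < Q y := lt_of_lt_of_le hc (hQ x y)
      rw [← mul_add]
      congr 1
      rw [div_div_eq_mul_div, Real.log_div (by positivity) hT.ne',
        Real.log_mul hv.ne' hS.ne', Real.log_div hT.ne' (by positivity),
        Real.log_mul hS.ne' hQy.ne', Real.log_div hv.ne' hQy.ne']
      ring


/-- if `I(P,W) ≤ λ I(P,V)` for every input distribution `P` and `λ ≥ 1`,
then for every joint distribution of `(U,X)` with Markov chain `U → X → (Y1,Y2)`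
(`Y1` output of `W`, `Y2` output of `V`), `I(X;Y1|U) + λ I(U;Y2) ≤ λ I(X;Y2)`. -/
theorem stmt7 {U X Y1 Y2 : Type*} [Fintype U] [Fintype X] [Fintype Y1] [Fintype Y2]
    (W : X → Y1 → ℝ) (V : X → Y2 → ℝ)
    (hWnn : ∀ x y, 0 ≤ W x y) (hWsum : ∀ x, ∑ y, W x y = 1)
    (hVnn : ∀ x y, 0 ≤ V x y) (hVsum : ∀ x, ∑ y, V x y = 1)
    (lam : ℝ) (hlam : 1 ≤ lam)
    (hcond : ∀ P ∈ stdSimplex ℝ X, mutInfo P W ≤ lam * mutInfo P V)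
    (p : U → X → ℝ) (hpnn : ∀ u x, 0 ≤ p u x) (hpsum : ∑ u, ∑ x, p u x = 1) :
    condMI p W + lam * miUY p V ≤ lam * mutInfo (fun x => ∑ u, p u x) V := by
  classical
  have hPnn : ∀ u, (0:ℝ) ≤ ∑ x, p u x := fun u => Finset.sum_nonneg fun x _ => hpnn u x
  -- Step A : condMI p W ≤ lam * condMI p V
  have stepA : condMI p W ≤ lam * condMI p V := by
    unfold condMI
    rw [Finset.mul_sum]
    refine Finset.sum_le_sum fun u _ => ?_
    rcases (hPnn u).eq_or_lt with h0 | hpos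
    · rw [← h0]; simp
    · have hmem : (fun x => p u x / ∑ x', p u x') ∈ stdSimplex ℝ X := by
        constructor
        · intro x; exact div_nonneg (hpnn u x) (hPnn u)
        · rw [← Finset.sum_div]; exact div_self hpos.ne'
      calc (∑ x, p u x) * mutInfo (fun x => p u x / ∑ x', p u x') W
          ≤ (∑ x, p u x) * (lam * mutInfo (fun x => p u x / ∑ x', p u x') V) :=
            mul_le_mul_of_nonneg_left (hcond _ hmem) hpos.le
        _ = lam * ((∑ x, p u x) * mutInfo (fun x => p u x / ∑ x', p u x') V) := by ring
  -- Step B : condMI p V + miUY p V = mutInfo (marginal) V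
  have stepB : condMI p V + miUY p V = mutInfo (fun x => ∑ u, p u x) V := by
    have hQswap : ∀ y, (∑ u', ∑ x, p u' x * V x y) = ∑ x, (∑ u, p u x) * V x y := by
      intro y
      rw [Finset.sum_comm]
      exact Finset.sum_congr rfl fun x _ => (Finset.sum_mul _ _ _).symm
    have hQle : ∀ u x y, p u x * V x y ≤ ∑ x', (∑ u', p u' x') * V x' y := by
      intro u x y
      calc p u x * V x y ≤ (∑ u', p u' x) * V x y :=
            mul_le_mul_of_nonneg_right
              (Finset.single_le_sum (fun u' _ => hpnn u' x) (Finset.mem_univ u)) (hVnn x y)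
        _ ≤ ∑ x', (∑ u', p u' x') * V x' y :=
            Finset.single_le_sum (fun x' _ => mul_nonneg
              (Finset.sum_nonneg fun u' _ => hpnn u' x') (hVnn x' y)) (Finset.mem_univ x)
    unfold condMI miUY
    simp only [hQswap]
    rw [← Finset.sum_add_distrib]
    rw [Finset.sum_congr rfl (fun u _ => key_u V hVnn (p u) (hpnn u)
      (fun y => ∑ x, (∑ u', p u' x) * V x y) (hQle u))]
    unfold mutInfo
    rw [Finset.sum_comm]
    refine Finset.sum_congr rfl fun x _ => ?_
    rw [Finset.sum_comm]
    refine Finset.sum_congr rfl fun y _ => ?_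
    rw [Finset.sum_mul, Finset.sum_mul]
  rw [← stepB, mul_add]
  linarith
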